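/- In the three-basis model with augmented systematic component ĉᴸᴹ as defined from valuation basis Aᴸ = ((δᴸ,μᴸ),(τᴸ,Sᴸ,S̄ᴸ)), the total expected discounted surplus -Vᴸ(0) + ∫₀ⁿ φᴹ(r) ĉᴸᴹ(r) dr - φᴹ(n)(S̄ᴹ - S̄ᴸ) equals E_M[∫₀ⁿ vᴹ(r) dBᴹ(r)] - φᴹ(n)S̄ᴹ, and hence is independent of the choice of valuation actuarial basis Aᴸ. -/

import Mathlib

open MeasureTheory Set

/-! Thiele's equation gives `(φᴹ Vᴸ)' = φᴹ (P - μᴹ Sᴹ) - φᴹ ĉᴸᴹ`, so `∫₀ⁿ φᴹ ĉᴸᴹ` is the basis-free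
`∫₀ⁿ φᴹ (P - μᴹ Sᴹ)` minus the boundary term `φᴹ(n) S̄ᴸ - Vᴸ(0)`, and every trace of the valuation
basis cancels. On the experience side `T` has survival function `exp (-∫ μᴹ)`, hence density
`μᴹ exp (-∫ μᴹ)`; Fubini turns the expected premiums into `∫₀ⁿ φᴹ P` and the density turns the
expected death benefit into `∫₀ⁿ φᴹ μᴹ Sᴹ`. -/

lemma hasDerivAt_exp_neg_integral {f : ℝ → ℝ} (hf : Continuous f) (t : ℝ) :
    HasDerivAt (fun u => Real.exp (-∫ r in (0:ℝ)..u, f r))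
      (-f t * Real.exp (-∫ r in (0:ℝ)..t, f r)) t := by
  simpa [mul_comm] using (hf.integral_hasStrictDerivAt 0 t).hasDerivAt.neg.exp

section Survival

variable {Ω : Type*} [MeasurableSpace Ω] {P : Measure Ω} {T : Ω → ℝ} {G ρ : ℝ → ℝ}

lemma antitone_of_measure_lt_eq_ofReal (hG : ∀ t, P {ω | t < T ω} = ENNReal.ofReal (G t))
    (hGnn : ∀ t, 0 ≤ G t) : Antitone G := by
  intro s t hst
  have hmono : P {ω | t < T ω} ≤ P {ω | s < T ω} := measure_mono fun ω h => hst.trans_lt h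
  rwa [hG, hG, ENNReal.ofReal_le_ofReal_iff (hGnn s)] at hmono

lemma density_nonneg_of_survival (hG : ∀ t, P {ω | t < T ω} = ENNReal.ofReal (G t))
    (hGnn : ∀ t, 0 ≤ G t) (hGd : ∀ t, HasDerivAt G (-ρ t) t) (t : ℝ) : 0 ≤ ρ t := by
  have := (antitone_of_measure_lt_eq_ofReal hG hGnn).deriv_nonpos (x := t)
  rw [(hGd t).deriv] at this
  linarith

lemma map_eq_withDensity_of_survival [IsFiniteMeasure P] (hT : Measurable T)
    (hG : ∀ t, P {ω | t < T ω} = ENNReal.ofReal (G t)) (hGnn : ∀ t, 0 ≤ G t)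
    (hGd : ∀ t, HasDerivAt G (-ρ t) t) (hρ : Continuous ρ) :
    P.map T = volume.withDensity fun t => ENNReal.ofReal (ρ t) := by
  refine Measure.ext_of_Ioc _ _ fun a b hab => ?_
  have hpre : T ⁻¹' Ioc a b = {ω | a < T ω} \ {ω | b < T ω} := by
    ext ω
    simp [not_lt]
  have hFTC : ∫ t in Ioc a b, ρ t = G a - G b := by
    rw [← intervalIntegral.integral_of_le hab.le,
      intervalIntegral.integral_eq_sub_of_hasDerivAt (f := -G)
        (fun t _ => by simpa using (hGd t).neg) (hρ.intervalIntegrable _ _), Pi.neg_apply,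
      Pi.neg_apply]
    ring
  rw [Measure.map_apply hT measurableSet_Ioc, hpre,
    measure_sdiff (ofPred_subset_ofPred.2 fun ω h => hab.trans h)
      (measurableSet_lt measurable_const hT).nullMeasurableSet (measure_ne_top P _),
    hG, hG, withDensity_apply _ measurableSet_Ioc,
    ← ofReal_integral_eq_lintegral_ofReal hρ.integrableOn_Ioc
      (Filter.Eventually.of_forall (density_nonneg_of_survival hG hGnn hGd)),
    hFTC, ENNReal.ofReal_sub _ (hGnn b)]

lemma integral_comp_eq_integral_density_mul [IsFiniteMeasure P] (hT : Measurable T)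
    (hG : ∀ t, P {ω | t < T ω} = ENNReal.ofReal (G t)) (hGnn : ∀ t, 0 ≤ G t)
    (hGd : ∀ t, HasDerivAt G (-ρ t) t) (hρ : Continuous ρ) {g : ℝ → ℝ} (hg : Measurable g) :
    ∫ ω, g (T ω) ∂P = ∫ t, ρ t * g t := by
  rw [← integral_map hT.aemeasurable hg.aestronglyMeasurable,
    map_eq_withDensity_of_survival hT hG hGnn hGd hρ,
    integral_withDensity_eq_integral_toReal_smul hρ.measurable.ennreal_ofReal
      (Filter.Eventually.of_forall fun _ => ENNReal.ofReal_lt_top)]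
  simp_rw [ENNReal.toReal_ofReal (density_nonneg_of_survival hG hGnn hGd _), smul_eq_mul]

lemma integral_integral_ite_lt [IsFiniteMeasure P] (hT : Measurable T) {ν : Measure ℝ} [SFinite ν]
    {h : ℝ → ℝ} (hh : Integrable h ν) :
    ∫ ω, ∫ r, (if r < T ω then h r else 0) ∂ν ∂P = ∫ r, P.real {ω | r < T ω} * h r ∂ν := by
  have hint : Integrable (fun p : Ω × ℝ => if p.2 < T p.1 then h p.2 else 0) (P.prod ν) :=
    (hh.comp_snd P).indicator (measurableSet_lt measurable_snd (hT.comp measurable_fst))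
  rw [integral_integral_swap hint]
  refine integral_congr_ae (Filter.Eventually.of_forall fun r => ?_)
  have hind : (fun ω => if r < T ω then h r else 0) = {ω | r < T ω}.indicator fun _ => h r := by
    ext ω
    simp [indicator_apply]
  simp only [hind, integral_indicator_const _ (measurableSet_lt measurable_const hT), smul_eq_mul]

lemma integral_discounted_cashflow [IsFiniteMeasure P] (hT : Measurable T)
    (hG : ∀ t, P {ω | t < T ω} = ENNReal.ofReal (G t)) (hGnn : ∀ t, 0 ≤ G t)
    (hGd : ∀ t, HasDerivAt G (-ρ t) t) (hρ : Continuous ρ) {v π S : ℝ → ℝ} (hv : Continuous v)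
    (hπ : Continuous π) (hS : Continuous S) {n : ℝ} (hn : 0 ≤ n) :
    ∫ ω, ((∫ r in (0:ℝ)..n, v r * (if r < T ω then π r else 0))
        - (if 0 < T ω ∧ T ω ≤ n then v (T ω) * S (T ω) else 0)) ∂P
      = ∫ r in (0:ℝ)..n, (G r * (v r * π r) - ρ r * (v r * S r)) := by
  have hpremium : ∀ ω, ∫ r in (0:ℝ)..n, v r * (if r < T ω then π r else 0)
      = ∫ r in Ioc 0 n, (if r < T ω then v r * π r else 0) := fun ω => by
    simp only [intervalIntegral.integral_of_le hn, mul_ite, mul_zero]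
  have hbenefit : ∀ ω, (if 0 < T ω ∧ T ω ≤ n then v (T ω) * S (T ω) else 0)
      = (Ioc 0 n).indicator (fun t => v t * S t) (T ω) := fun ω => by
    simp [indicator_apply]
  have hvπ : Integrable (fun r => v r * π r) (volume.restrict (Ioc 0 n)) :=
    (hv.mul hπ).integrableOn_Icc.mono_set Ioc_subset_Icc_self
  have hpremium_int : Integrable
      (fun ω => ∫ r in Ioc 0 n, (if r < T ω then v r * π r else 0)) P :=
    ((hvπ.comp_snd P).indicator
      (measurableSet_lt measurable_snd (hT.comp measurable_fst))).integral_prod_left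
  have hvS : IntegrableOn (fun t => v t * S t) (Ioc 0 n) (P.map T) :=
    (hv.mul hS).integrableOn_Icc.mono_set Ioc_subset_Icc_self
  have hbenefit_int : Integrable (fun ω => (Ioc 0 n).indicator (fun t => v t * S t) (T ω)) P :=
    (hvS.integrable_indicator measurableSet_Ioc).comp_measurable hT
  simp only [hpremium, hbenefit]
  rw [integral_sub hpremium_int hbenefit_int, integral_integral_ite_lt hT hvπ,
    integral_comp_eq_integral_density_mul (g := (Ioc 0 n).indicator fun t => v t * S t)
      hT hG hGnn hGd hρ ((hv.mul hS).measurable.indicator measurableSet_Ioc)]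
  have hGc : Continuous G := continuous_iff_continuousAt.2 fun t => (hGd t).continuousAt
  have hpremium_cont : Continuous fun r => G r * (v r * π r) := by fun_prop
  have hbenefit_cont : Continuous fun r => ρ r * (v r * S r) := by fun_prop
  rw [intervalIntegral.integral_sub (hpremium_cont.intervalIntegrable 0 n)
    (hbenefit_cont.intervalIntegrable 0 n)]
  simp only [← indicator_mul_right, integral_indicator measurableSet_Ioc,
    intervalIntegral.integral_of_le hn, measureReal_def, hG, ENNReal.toReal_ofReal (hGnn _)]

end Survival

lemma integral_mul_surplus_eq {δL μL δM μM τL π SL SM V φ : ℝ → ℝ} {a b : ℝ} (hab : a ≤ b)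
    (hδL : Continuous δL) (hμL : Continuous μL) (hδM : Continuous δM) (hμM : Continuous μM)
    (hτL : Continuous τL) (hπ : Continuous π) (hSL : Continuous SL) (hSM : Continuous SM)
    (hφ : ∀ t, HasDerivAt φ (-(δM t + μM t) * φ t) t)
    (hV : ∀ t ∈ Icc a b, HasDerivAt V (δL t * V t + τL t - μL t * (SL t - V t)) t) :
    ∫ t in a..b, φ t * ((δM t - δL t) * V t - (μM t - μL t) * (SL t - V t)
        + (π t - τL t) - μM t * (SM t - SL t))
      = (∫ t in a..b, φ t * (π t - μM t * SM t)) - (φ b * V b - φ a * V a) := by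
  have hφc : Continuous φ := continuous_iff_continuousAt.2 fun t => (hφ t).continuousAt
  have hVc : ContinuousOn V (uIcc a b) := by
    rw [uIcc_of_le hab]
    exact fun t ht => (hV t ht).continuousAt.continuousWithinAt
  have hcashflow : IntervalIntegrable (fun t => φ t * (π t - μM t * SM t)) volume a b :=
    (by fun_prop : Continuous fun t => φ t * (π t - μM t * SM t)).intervalIntegrable a b
  have hsurplus : IntervalIntegrable (fun t => φ t * ((δM t - δL t) * V t
      - (μM t - μL t) * (SL t - V t) + (π t - τL t) - μM t * (SM t - SL t))) volume a b :=
    ContinuousOn.intervalIntegrable (by fun_prop)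
  have hderiv : ∀ t ∈ uIcc a b, HasDerivAt (fun u => φ u * V u)
      (φ t * (π t - μM t * SM t) - φ t * ((δM t - δL t) * V t
        - (μM t - μL t) * (SL t - V t) + (π t - τL t) - μM t * (SM t - SL t))) t := by
    intro t ht
    rw [uIcc_of_le hab] at ht
    exact ((hφ t).mul (hV t ht)).congr_deriv (by ring)
  have hFTC := intervalIntegral.integral_eq_sub_of_hasDerivAt hderiv (hcashflow.sub hsurplus)
  rw [intervalIntegral.integral_sub hcashflow hsurplus] at hFTC
  linarith

theorem total_surplus_invariant_under_valuation_basis_general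
    {Ω : Type*} [m0 : MeasurableSpace Ω] (P : Measure Ω) [IsProbabilityMeasure P]
    (n SbarL SbarM : ℝ) (hn : 0 < n)
    (T : Ω → ℝ) (hT : Measurable T)
    (δL μL δM μM τL Prem SL SM VL chat : ℝ → ℝ)
    (hδL : Continuous δL) (hμL : Continuous μL)
    (hδM : Continuous δM) (hμM : Continuous μM)
    (hτL : Continuous τL) (hPrem : Continuous Prem)
    (hSL : Continuous SL) (hSM : Continuous SM)
    -- under the experience measure, T has hazard rate μᴹ
    (hTlaw : ∀ t : ℝ, P {ω | t < T ω}
      = ENNReal.ofReal (Real.exp (-(∫ r in (0:ℝ)..t, μM r))))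
    (vM φM : ℝ → ℝ)
    (hvM : ∀ t, vM t = Real.exp (-(∫ r in (0:ℝ)..t, δM r)))
    (hφM : ∀ t, φM t = Real.exp (-(∫ r in (0:ℝ)..t, (δM r + μM r))))
    -- Vᴸ solves Thiele's equation on the valuation actuarial basis with Vᴸ(n) = S̄ᴸ
    (hVL : ∀ t ∈ Icc (0:ℝ) n,
      HasDerivAt VL (δL t * VL t + τL t - μL t * (SL t - VL t)) t)
    (hVLn : VL n = SbarL)
    -- augmented systematic component of surplus
    (hchat : ∀ t, chat t =
      (δM t - δL t) * VL t - (μM t - μL t) * (SL t - VL t)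
      + (Prem t - τL t) - μM t * (SM t - SL t)) :
    -VL 0 + (∫ r in (0:ℝ)..n, φM r * chat r) - φM n * (SbarM - SbarL)
      = (∫ ω, ((∫ r in (0:ℝ)..n, vM r * (if r < T ω then Prem r else 0))
          - (if 0 < T ω ∧ T ω ≤ n then vM (T ω) * SM (T ω) else 0)) ∂P)
        - φM n * SbarM := by
  set G : ℝ → ℝ := fun t => Real.exp (-∫ r in (0:ℝ)..t, μM r)
  have hGd : ∀ t, HasDerivAt G (-(μM t * G t)) t := fun t => by
    simpa only [neg_mul] using hasDerivAt_exp_neg_integral hμM t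
  have hGc : Continuous G := continuous_iff_continuousAt.2 fun t => (hGd t).continuousAt
  have hvMc : Continuous vM := by
    rw [funext hvM]
    exact continuous_iff_continuousAt.2 fun t => (hasDerivAt_exp_neg_integral hδM t).continuousAt
  have hφd : ∀ t, HasDerivAt φM (-(δM t + μM t) * φM t) t := fun t => by
    rw [funext hφM]
    simpa only [Pi.add_apply] using hasDerivAt_exp_neg_integral (hδM.add hμM) t
  have hφ_eq : ∀ t, φM t = vM t * G t := fun t => by
    rw [hφM, hvM, ← Real.exp_add, intervalIntegral.integral_add (hδM.intervalIntegrable _ _)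
      (hμM.intervalIntegrable _ _), neg_add]
  have hφ0 : φM 0 = 1 := by simp [hφM]
  simp only [hchat]
  rw [integral_mul_surplus_eq hn.le hδL hμL hδM hμM hτL hPrem hSL hSM hφd hVL,
    integral_discounted_cashflow hT hTlaw (fun _ => (Real.exp_pos _).le) hGd (hμM.mul hGc) hvMc
      hPrem hSM hn.le, hVLn, hφ0]
  have hintegrand : ∀ r, φM r * (Prem r - μM r * SM r)
      = G r * (vM r * Prem r) - μM r * G r * (vM r * SM r) := fun r => by
    rw [hφ_eq]; ring
  simp only [hintegrand]
  ring

/-- Invariance of the total expected discounted surplus under change of valuation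
actuarial basis: `-Vᴸ(0) + ∫₀ⁿ φᴹ ĉᴸᴹ - φᴹ(n)(S̄ᴹ - S̄ᴸ)` equals
`E_M[∫₀ⁿ vᴹ dBᴹ] - φᴹ(n) S̄ᴹ`, which does not depend on the valuation basis. -/
theorem total_surplus_invariant_under_valuation_basis
    {Ω : Type*} [m0 : MeasurableSpace Ω] (P : Measure Ω) [IsProbabilityMeasure P]
    (n SbarL SbarM : ℝ) (hn : 0 < n)
    (T : Ω → ℝ) (hT : Measurable T) (hTnn : ∀ ω, 0 ≤ T ω)
    (δL μL δM μM τL Prem SL SM VL chat : ℝ → ℝ)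
    (hδL : Continuous δL) (hμL : Continuous μL)
    (hδM : Continuous δM) (hμM : Continuous μM)
    (hτL : Continuous τL) (hPrem : Continuous Prem)
    (hSL : Continuous SL) (hSM : Continuous SM)
    -- under the experience measure, T has hazard rate μᴹ
    (hTlaw : ∀ t : ℝ, P {ω | t < T ω}
      = ENNReal.ofReal (Real.exp (-(∫ r in (0:ℝ)..t, μM r))))
    (vM φM : ℝ → ℝ)
    (hvM : ∀ t, vM t = Real.exp (-(∫ r in (0:ℝ)..t, δM r)))
    (hφM : ∀ t, φM t = Real.exp (-(∫ r in (0:ℝ)..t, (δM r + μM r))))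
    -- Vᴸ solves Thiele's equation on the valuation actuarial basis with Vᴸ(n) = S̄ᴸ
    (hVL : ∀ t ∈ Icc (0:ℝ) n,
      HasDerivAt VL (δL t * VL t + τL t - μL t * (SL t - VL t)) t)
    (hVLn : VL n = SbarL)
    -- augmented systematic component of surplus
    (hchat : ∀ t, chat t =
      (δM t - δL t) * VL t - (μM t - μL t) * (SL t - VL t)
      + (Prem t - τL t) - μM t * (SM t - SL t)) :
    -VL 0 + (∫ r in (0:ℝ)..n, φM r * chat r) - φM n * (SbarM - SbarL)
      = (∫ ω, ((∫ r in (0:ℝ)..n, vM r * (if r < T ω then Prem r else 0))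
          - (if 0 < T ω ∧ T ω ≤ n then vM (T ω) * SM (T ω) else 0)) ∂P)
        - φM n * SbarM :=
  total_surplus_invariant_under_valuation_basis_general (m0 := m0) P n SbarL SbarM hn T hT δL μL δM
    μM τL Prem SL SM VL chat hδL hμL hδM hμM hτL hPrem hSL hSM hTlaw vM φM hvM hφM hVL hVLn hchat
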